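/- The generating function F(t,z) = sum_{n≥0} (sum over Dyck paths p of order n of t^(rk(p))) z^n satisfies the algebraic equation t z F(t,z)^2 - (1 + z(t-1)) F(t,z) + 1 = 0; equivalently, F is the Narayana number generating function. -/

import Mathlib

open Finset

/-- Number of up steps (`true`) among the first `k` steps of `p`. -/
def upCount {m : ℕ} (p : Fin m → Bool) (k : ℕ) : ℕ :=
  (Finset.univ.filter fun i : Fin m => (i : ℕ) < k ∧ p i = true).card

/-- Number of down steps (`false`) among the first `k` steps of `p`. -/
def downCount {m : ℕ} (p : Fin m → Bool) (k : ℕ) : ℕ :=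
  (Finset.univ.filter fun i : Fin m => (i : ℕ) < k ∧ p i = false).card

/-- `p` is a Dyck path of order `n`: a path of `2n` steps (up = `true`,
down = `false`), with `n` up steps, never going below the x-axis. -/
def IsDyck (n : ℕ) (p : Fin (2 * n) → Bool) : Prop :=
  upCount p (2 * n) = n ∧ ∀ k < 2 * n + 1, downCount p k ≤ upCount p k

instance (n : ℕ) : DecidablePred (IsDyck n) := fun p => by
  unfold IsDyck; infer_instance

/-- The Finset of Dyck paths of order `n`. -/
def dyckSet (n : ℕ) : Finset (Fin (2 * n) → Bool) :=
  Finset.univ.filter (IsDyck n)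

/-- Height of the path after `k` steps. -/
def height {n : ℕ} (p : Fin (2 * n) → Bool) (k : ℕ) : ℕ :=
  upCount p k - downCount p k

/-- The area of a Dyck path: the number of unused lattice points strictly below
the path and weakly above the x-axis (equivalently, the number of
`1/√2 × 1/√2` diamonds fitting between the path and the x-axis). -/
def area {n : ℕ} (p : Fin (2 * n) → Bool) : ℕ :=
  ∑ k ∈ Finset.range (2 * n + 1), height p k / 2

/-- The `j`-th step of `p` (defaulting to `false` out of range). -/
def stepAt {m : ℕ} (p : Fin m → Bool) (j : ℕ) : Bool :=
  if h : j < m then p ⟨j, h⟩ else false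

/-- The rank of a Dyck path of order `n` in the noncrossing partition lattice
under Stump's bijection: equivalently (Simion–Ullman) the number of letters `b`
and `r` in its SU-word, i.e. the number of `i ∈ {1,…,n-1}` for which the step
leaving the `i`-th odd lattice point (the step with index `2i-1`, 0-indexed)
is an up step. -/
def rk {n : ℕ} (p : Fin (2 * n) → Bool) : ℕ :=
  ((Finset.Icc 1 (n - 1)).filter fun i => stepAt p (2 * i - 1) = true).card

/-!
Read a Dyck path as a word in `U` and `D`. Its rank counts the up steps in odd positions
(0-indexed), the last position `2n - 1` being always a down step. For the first-return
decomposition `w = U u D v`, the odd-position ups of `w` are the even-position ups of `u` plus the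
odd-position ups of `v`, and the even-position ups of `w` are `1 +` the odd-position ups of `u`
plus the even-position ups of `v`. So the series `A` and `B` counting Dyck words by odd and by
even ups satisfy `A = 1 + z B A` and `B = 1 + t z A B`. Hence `B - 1 = t (A - 1)`, and eliminating
`B` gives `t z A² - (1 + z (t - 1)) A + 1 = 0`.
-/

open DyckStep

theorem List.count_take_ofFn {α : Type*} [DecidableEq α] :
    ∀ {m : ℕ} (f : Fin m → α) (a : α) (k : ℕ),
      ((List.ofFn f).take k).count a = #{i : Fin m | (i : ℕ) < k ∧ f i = a}
  | 0, _, _, _ => by simp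
  | _ + 1, _, _, 0 => by simp
  | m + 1, f, a, k + 1 => by
    rw [List.ofFn_succ, List.take_succ_cons, List.count_cons, count_take_ofFn,
      Fin.card_filter_univ_succ']
    simp [add_comm]

theorem List.count_U_add_count_D (l : List DyckStep) : l.count U + l.count D = l.length := by
  induction l with
  | nil => rfl
  | cons s l ih => cases s <;> simp <;> omega

mutual
def oddUps : List DyckStep → ℕ
  | [] => 0
  | _ :: l => evenUps l
def evenUps : List DyckStep → ℕ
  | [] => 0
  | s :: l => (if s = U then 1 else 0) + oddUps l
end

theorem ups_append_of_even_length :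
    ∀ {l₁ : List DyckStep}, Even l₁.length → ∀ l₂ : List DyckStep,
      oddUps (l₁ ++ l₂) = oddUps l₁ + oddUps l₂ ∧ evenUps (l₁ ++ l₂) = evenUps l₁ + evenUps l₂
  | [], _, _ => by simp [oddUps, evenUps]
  | [_], h, _ => by simp at h
  | a :: b :: l, h, l₂ => by
    obtain ⟨ih₁, ih₂⟩ :=
      ups_append_of_even_length (l₁ := l) (by simpa [Nat.even_add_one] using h) l₂
    simp only [List.cons_append, oddUps, evenUps, ih₁, ih₂]
    constructor <;> ring

theorem oddUps_eq_card :
    ∀ l : List DyckStep, oddUps l = #{i ∈ range (l.length / 2) | l.getD (2 * i + 1) D = U}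
  | [] => by simp [oddUps]
  | [_] => by simp [oddUps, evenUps]
  | a :: b :: l => by
    have hlen : (a :: b :: l).length / 2 = l.length / 2 + 1 := by
      simp only [List.length_cons]
      omega
    have hshift : ∀ i, (a :: b :: l).getD (2 * (i + 1) + 1) D = l.getD (2 * i + 1) D := by
      intro i
      rw [show 2 * (i + 1) + 1 = 2 * i + 1 + 1 + 1 by ring, List.getD_cons_succ,
        List.getD_cons_succ]
    rw [hlen, Finset.card_filter, Finset.sum_range_succ', ← Finset.card_filter]
    simp only [hshift, ← oddUps_eq_card l]
    simp [oddUps, evenUps, add_comm]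

namespace DyckWord

theorem toList_nest_add (u v : DyckWord) :
    (u.nest + v).toList = U :: (u.toList ++ D :: v.toList) := by
  show [U] ++ u.toList ++ [D] ++ v.toList = _
  simp

theorem even_length_toList (w : DyckWord) : Even w.toList.length :=
  ⟨w.semilength, by rw [← two_mul_semilength_eq_length, two_mul]⟩

theorem oddUps_nest_add (u v : DyckWord) :
    oddUps (u.nest + v).toList = evenUps u.toList + oddUps v.toList := by
  rw [toList_nest_add, oddUps, (ups_append_of_even_length u.even_length_toList _).2, evenUps]
  simp

theorem evenUps_nest_add (u v : DyckWord) :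
    evenUps (u.nest + v).toList = 1 + oddUps u.toList + evenUps v.toList := by
  rw [toList_nest_add, evenUps, (ups_append_of_even_length u.even_length_toList _).1, oddUps,
    if_pos rfl, add_assoc]

theorem getD_length_sub_one (w : DyckWord) : w.toList.getD (w.toList.length - 1) D = D := by
  by_cases hw : w = 0
  · subst hw; rfl
  · have hne := toList_ne_nil.mpr hw
    rw [List.getD_eq_getElem _ _ (by simpa [Nat.pos_iff_ne_zero] using hne),
      ← List.getLast_eq_getElem hne, getLast_eq_D]

def ofSemilength (n : ℕ) : Finset DyckWord :=
  Finset.univ.map (Function.Embedding.subtype fun w : DyckWord => w.semilength = n)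

@[simp]
theorem mem_ofSemilength {n : ℕ} {w : DyckWord} : w ∈ ofSemilength n ↔ w.semilength = n := by
  simp [ofSemilength]

theorem ofSemilength_zero : ofSemilength 0 = {0} := by
  ext w
  simp only [mem_ofSemilength, Finset.mem_singleton]
  refine ⟨fun h => ?_, fun h => h ▸ semilength_zero⟩
  rw [← toList_eq_nil, ← List.length_eq_zero_iff, ← two_mul_semilength_eq_length, h]

theorem sum_ofSemilength_succ {M : Type*} [AddCommMonoid M] (f : DyckWord → M) (n : ℕ) :
    ∑ w ∈ ofSemilength (n + 1), f w =
      ∑ ij ∈ antidiagonal n, ∑ u ∈ ofSemilength ij.1, ∑ v ∈ ofSemilength ij.2, f (u.nest + v) := by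
  simp_rw [← Finset.sum_product', Finset.sum_sigma']
  symm
  refine Finset.sum_nbij' (fun x => x.2.1.nest + x.2.2)
    (fun w => ⟨(w.insidePart.semilength, w.outsidePart.semilength),
      (w.insidePart, w.outsidePart)⟩) ?_ ?_ ?_ ?_ (fun _ _ => rfl)
  · rintro ⟨⟨i, j⟩, u, v⟩ h
    simp only [mem_sigma, HasAntidiagonal.mem_antidiagonal, mem_product, mem_ofSemilength,
      semilength_add, semilength_nest] at h ⊢
    omega
  · intro w hw
    have hw0 : w ≠ 0 := by rintro rfl; simp at hw
    simp only [mem_ofSemilength, mem_sigma, HasAntidiagonal.mem_antidiagonal, mem_product,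
      and_self, and_true] at hw ⊢
    have := semilength_insidePart_add_semilength_outsidePart_add_one hw0
    omega
  · rintro ⟨⟨i, j⟩, u, v⟩ h
    simp_all
  · intro w hw
    have hw0 : w ≠ 0 := by rintro rfl; simp at hw
    exact nest_insidePart_add_outsidePart hw0

end DyckWord

section Series

open PowerSeries DyckWord

variable {R : Type*} [CommSemiring R] (t : R)

noncomputable def oddUpsSeries : PowerSeries R :=
  mk fun n => ∑ w ∈ ofSemilength n, t ^ oddUps w.toList

noncomputable def evenUpsSeries : PowerSeries R :=
  mk fun n => ∑ w ∈ ofSemilength n, t ^ evenUps w.toList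

theorem oddUpsSeries_eq : oddUpsSeries t = 1 + X * evenUpsSeries t * oddUpsSeries t := by
  ext (_ | n)
  · simp [oddUpsSeries, ofSemilength_zero, oddUps]
  · rw [map_add, coeff_one, if_neg n.succ_ne_zero, zero_add, mul_assoc, coeff_succ_X_mul,
      coeff_mul]
    simp only [oddUpsSeries, evenUpsSeries, coeff_mk, sum_ofSemilength_succ, oddUps_nest_add,
      pow_add, Finset.sum_mul_sum]

theorem evenUpsSeries_eq : evenUpsSeries t = 1 + C t * X * oddUpsSeries t * evenUpsSeries t := by
  ext (_ | n)
  · simp [evenUpsSeries, ofSemilength_zero, evenUps]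
  · rw [map_add, coeff_one, if_neg n.succ_ne_zero, zero_add, mul_assoc, mul_assoc, coeff_C_mul,
      coeff_succ_X_mul, coeff_mul]
    simp only [oddUpsSeries, evenUpsSeries, coeff_mk, sum_ofSemilength_succ, evenUps_nest_add,
      Finset.sum_mul_sum]
    simp only [Finset.mul_sum]
    refine Finset.sum_congr rfl fun _ _ => Finset.sum_congr rfl fun _ _ =>
      Finset.sum_congr rfl fun _ _ => by ring

theorem oddUpsSeries_quadratic {R : Type*} [CommRing R] (t : R) :
    C t * X * oddUpsSeries t ^ 2 - (1 + X * C (t - 1)) * oddUpsSeries t + 1 = 0 := by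
  rw [map_sub, map_one]
  linear_combination (C t * X * oddUpsSeries t - 1) * oddUpsSeries_eq t
    - X * oddUpsSeries t * evenUpsSeries_eq t

end Series

section Paths

variable {m n : ℕ}

def pathWord (p : Fin m → Bool) : List DyckStep :=
  List.ofFn fun i => if p i then U else D

def pathOfList (l : List DyckStep) (m : ℕ) : Fin m → Bool :=
  fun i => l.getD i D = U

@[simp]
theorem length_pathWord (p : Fin m → Bool) : (pathWord p).length = m :=
  List.length_ofFn

theorem count_U_take_pathWord (p : Fin m → Bool) (k : ℕ) :
    ((pathWord p).take k).count U = upCount p k := by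
  rw [pathWord, List.count_take_ofFn, upCount]
  congr! 3
  cases p _ <;> simp

theorem count_D_take_pathWord (p : Fin m → Bool) (k : ℕ) :
    ((pathWord p).take k).count D = downCount p k := by
  rw [pathWord, List.count_take_ofFn, downCount]
  congr! 3
  cases p _ <;> simp

theorem getD_pathWord_eq_U (p : Fin m → Bool) (j : ℕ) :
    (pathWord p).getD j D = U ↔ stepAt p j = true := by
  by_cases hj : j < m
  · rw [List.getD_eq_getElem _ _ (by simpa using hj)]
    simp [pathWord, stepAt, hj]
  · rw [List.getD_eq_default _ _ (by simpa using hj)]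
    simp [stepAt, hj]

theorem pathWord_pathOfList {l : List DyckStep} (h : l.length = m) :
    pathWord (pathOfList l m) = l := by
  refine List.ext_getElem (by simp [h]) fun i _ hi => ?_
  simp only [pathWord, pathOfList, List.getElem_ofFn, List.getD_eq_getElem _ _ hi]
  cases l[i] <;> rfl

theorem pathOfList_pathWord (p : Fin m → Bool) : pathOfList (pathWord p) m = p := by
  funext i
  simp only [pathOfList, getD_pathWord_eq_U]
  simp [stepAt]

theorem mem_dyckSet {p : Fin (2 * n) → Bool} : p ∈ dyckSet n ↔ IsDyck n p := by
  simp [dyckSet]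

def IsDyck.toDyckWord {p : Fin (2 * n) → Bool} (hp : IsDyck n p) : DyckWord where
  toList := pathWord p
  count_U_eq_count_D := by
    have hU : (pathWord p).count U = n := by
      rw [← List.take_of_length_le (length_pathWord p).le, count_U_take_pathWord, hp.1]
    have := List.count_U_add_count_D (pathWord p)
    rw [length_pathWord] at this
    omega
  count_D_le_count_U k := by
    rw [List.take_eq_take_min, count_U_take_pathWord, count_D_take_pathWord]
    exact hp.2 _ (by simp)

@[simp]
theorem IsDyck.toList_toDyckWord {p : Fin (2 * n) → Bool} (hp : IsDyck n p) :
    hp.toDyckWord.toList = pathWord p :=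
  rfl

theorem IsDyck.semilength_toDyckWord {p : Fin (2 * n) → Bool} (hp : IsDyck n p) :
    hp.toDyckWord.semilength = n := by
  have := hp.toDyckWord.two_mul_semilength_eq_length
  rw [IsDyck.toList_toDyckWord, length_pathWord] at this
  omega

theorem isDyck_of_pathWord_eq {p : Fin (2 * n) → Bool} {w : DyckWord} (hw : w.semilength = n)
    (h : pathWord p = w.toList) : IsDyck n p := by
  refine ⟨?_, fun k _ => ?_⟩
  · rw [← count_U_take_pathWord, h,
      List.take_of_length_le (by rw [← DyckWord.two_mul_semilength_eq_length, hw])]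
    exact hw
  · rw [← count_U_take_pathWord, ← count_D_take_pathWord, h]
    exact w.count_D_le_count_U k

theorem IsDyck.last_step {p : Fin (2 * n) → Bool} (hp : IsDyck n p) :
    stepAt p (2 * n - 1) = false := by
  have hD := hp.toDyckWord.getD_length_sub_one
  rw [IsDyck.toList_toDyckWord, length_pathWord] at hD
  simpa using (getD_pathWord_eq_U p (2 * n - 1)).not.mp (by rw [hD]; simp)

theorem rk_eq_oddUps {p : Fin (2 * n) → Bool} (hp : IsDyck n p) :
    rk p = oddUps (pathWord p) := by
  rw [rk, oddUps_eq_card, length_pathWord, Nat.mul_div_cancel_left _ two_pos]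
  simp only [getD_pathWord_eq_U]
  refine Finset.card_nbij' (· - 1) (· + 1) ?_ ?_ ?_ ?_
  · intro i hi
    simp only [Finset.mem_coe, Finset.mem_filter, Finset.mem_Icc, Finset.mem_range] at hi ⊢
    exact ⟨by omega, by rw [show 2 * (i - 1) + 1 = 2 * i - 1 by omega]; exact hi.2⟩
  · intro i hi
    simp only [Finset.mem_coe, Finset.mem_filter, Finset.mem_Icc, Finset.mem_range] at hi ⊢
    have hi' : i + 1 ≤ n - 1 := by
      by_contra
      have hlast := hp.last_step
      rw [show 2 * n - 1 = 2 * i + 1 by omega, hi.2] at hlast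
      exact Bool.noConfusion hlast
    exact ⟨by omega, by rw [show 2 * (i + 1) - 1 = 2 * i + 1 by omega]; exact hi.2⟩
  · intro i hi
    simp only [Finset.mem_coe, Finset.mem_filter, Finset.mem_Icc] at hi
    show i - 1 + 1 = i
    omega
  · intro i _
    simp

theorem sum_dyckSet_eq_sum_ofSemilength {M : Type*} [AddCommMonoid M] (f : List DyckStep → M)
    (n : ℕ) : ∑ p ∈ dyckSet n, f (pathWord p) = ∑ w ∈ DyckWord.ofSemilength n, f w.toList := by
  have hlen {w : DyckWord} (hw : w ∈ DyckWord.ofSemilength n) : w.toList.length = 2 * n := by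
    rw [← DyckWord.two_mul_semilength_eq_length, DyckWord.mem_ofSemilength.1 hw]
  refine Finset.sum_bij' (fun p hp => (mem_dyckSet.1 hp).toDyckWord)
    (fun w _ => pathOfList w.toList (2 * n)) (fun p hp => ?_) (fun w hw => ?_)
    (fun p _ => pathOfList_pathWord p) (fun w hw => DyckWord.ext (pathWord_pathOfList (hlen hw)))
    (fun _ _ => rfl)
  · exact DyckWord.mem_ofSemilength.2 (mem_dyckSet.1 hp).semilength_toDyckWord
  · exact mem_dyckSet.2 <|
      isDyck_of_pathWord_eq (DyckWord.mem_ofSemilength.1 hw) (pathWord_pathOfList (hlen hw))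

end Paths

theorem sum_dyckSet_pow_rk {R : Type*} [CommSemiring R] (t : R) (n : ℕ) :
    ∑ p ∈ dyckSet n, t ^ rk p = PowerSeries.coeff n (oddUpsSeries t) := by
  rw [oddUpsSeries, PowerSeries.coeff_mk,
    ← sum_dyckSet_eq_sum_ofSemilength fun l => t ^ oddUps l]
  exact Finset.sum_congr rfl fun p hp => by rw [rk_eq_oddUps (mem_dyckSet.1 hp)]

/-- The rank generating function `F(t,z) = ∑_n (∑_{p ∈ Dyck(n)} t^rk(p)) z^n`
(the Narayana number generating function) satisfies the algebraic equation
`t z F² - (1 + z(t-1)) F + 1 = 0`. -/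
theorem narayana_algebraic_equation (t : ℝ) (F : PowerSeries ℝ)
    (hF : F = PowerSeries.mk fun n => ∑ p ∈ dyckSet n, t ^ rk p) :
    PowerSeries.C t * PowerSeries.X * F ^ 2
      - (1 + PowerSeries.X * PowerSeries.C (t - 1)) * F + 1 = 0 := by
  have hF' : F = oddUpsSeries t := by
    rw [hF]
    exact PowerSeries.ext fun n => by rw [PowerSeries.coeff_mk, sum_dyckSet_pow_rk]
  rw [hF']
  exact oddUpsSeries_quadratic t
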